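/- arXiv:1707.00771 — 2 statements merged into one kernel-verified Lean document; each statement's English description precedes it below -/
import Mathlib

section
/- For every x ∈ ℝ^d and every u ∈ ℕ, u·Φ(x) ⊆ Φ(x); that is, if y ∈ Φ(x) then uy ∈ Φ(x). -/
open scoped ENNReal
open Filter

/-- Sup-norm distance from `x ∈ ℝ^d` to the nearest point of `ℤ^d`. -/
noncomputable def nrm {d : ℕ} (x : Fin d → ℝ) : ℝ :=
  ⨆ i, |x i - round (x i)|

/-- The class `𝒟` of non-increasing `ψ : ℕ → ℝ≥0` with `Σ ψ(n)^d = ∞`. -/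
def calD (d : ℕ) : Set (ℕ → ℝ) :=
  {ψ | (∀ n, 0 ≤ ψ n) ∧ Antitone ψ ∧ ¬ Summable (fun n => ψ n ^ d)}

/-- The inhomogeneously `ψ`-approximable pairs. -/
def W {d : ℕ} (ψ : ℕ → ℝ) : Set ((Fin d → ℝ) × (Fin d → ℝ)) :=
  {p | ∃ᶠ n : ℕ in atTop, nrm (fun i => (n : ℝ) * p.1 i + p.2 i) < ψ n}

/-- `Π = ⋂_{ψ ∈ 𝒟} W(ψ)`. -/
def PiSet (d : ℕ) : Set ((Fin d → ℝ) × (Fin d → ℝ)) := ⋂ ψ ∈ calD d, W ψ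

/-- The vertical fiber `Φ(x)`. -/
def Phi {d : ℕ} (x : Fin d → ℝ) : Set (Fin d → ℝ) := {y | (x, y) ∈ PiSet d}

/-!
For `ψ ∈ 𝒟` and `u ≥ 1` the rescaled function `n ↦ ψ(un)/u` is again in `𝒟`: it is still
non-increasing, and for a non-increasing sequence summing along the multiples of `u` converges
exactly when the whole series does. Since `y ∈ Φ(x)`, infinitely many `n` satisfy
`‖nx + y‖ < ψ(un)/u`, and as `‖u z‖ ≤ u ‖z‖` this gives `‖(un)x + uy‖ < ψ(un)` for the
infinitely many indices `un`.
-/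

lemma nrm_nonneg {d : ℕ} (z : Fin d → ℝ) : 0 ≤ nrm z :=
  Real.iSup_nonneg fun _ => abs_nonneg _

lemma abs_sub_round_le_nrm {d : ℕ} (z : Fin d → ℝ) (i : Fin d) : |z i - round (z i)| ≤ nrm z :=
  le_ciSup (f := fun i => |z i - round (z i)|)
    ⟨1 / 2, by rintro _ ⟨j, rfl⟩; exact abs_sub_round (z j)⟩ i

lemma nrm_natCast_mul_le {d : ℕ} (u : ℕ) (z : Fin d → ℝ) :
    nrm (fun i => (u : ℝ) * z i) ≤ u * nrm z := by
  refine Real.iSup_le (fun i => ?_) (mul_nonneg u.cast_nonneg (nrm_nonneg z))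
  calc |(u : ℝ) * z i - round ((u : ℝ) * z i)|
      ≤ |(u : ℝ) * z i - ((u * round (z i) : ℤ) : ℝ)| := round_le _ _
    _ = u * |z i - round (z i)| := by push_cast; rw [← mul_sub, abs_mul, Nat.abs_cast]
    _ ≤ u * nrm z := by gcongr; exact abs_sub_round_le_nrm z i

lemma Antitone.summable_comp_mul_iff {g : ℕ → ℝ} (hg : Antitone g) (u : ℕ) [NeZero u] :
    Summable (fun n => g (u * n)) ↔ Summable g := by
  rw [← summable_indicator_mod_iff hg (0 : ZMod u), ← Nat.cast_zero,
    summable_indicator_mod_iff_summable]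
  rfl

lemma comp_mul_div_mem_calD {d : ℕ} {ψ : ℕ → ℝ} (hψ : ψ ∈ calD d) {u : ℕ} (hu : 0 < u) :
    (fun n => ψ (u * n) / u) ∈ calD d := by
  obtain ⟨hψ0, hψa, hψs⟩ := hψ
  have : NeZero u := ⟨hu.ne'⟩
  refine ⟨fun n => div_nonneg (hψ0 _) u.cast_nonneg, ?_, ?_⟩
  · exact fun a b hab =>
      div_le_div_of_nonneg_right (hψa (Nat.mul_le_mul_left u hab)) u.cast_nonneg
  · have hψda : Antitone fun n => ψ n ^ d := fun a b hab => pow_le_pow_left₀ (hψ0 b) (hψa hab) d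
    simpa only [div_pow, summable_div_const_iff (a := (u : ℝ) ^ d) (by positivity),
      hψda.summable_comp_mul_iff u] using hψs

lemma natCast_mul_snd_mem_W {d : ℕ} {ψ : ℕ → ℝ} {u : ℕ} (hu : 0 < u) {x y : Fin d → ℝ}
    (h : (x, y) ∈ W (fun n => ψ (u * n) / u)) : (x, fun i => (u : ℝ) * y i) ∈ W ψ := by
  refine (tendsto_id.const_mul_atTop' hu).frequently (h.mono fun n hn => ?_)
  calc nrm (fun i => ((u * n : ℕ) : ℝ) * x i + u * y i)
      = nrm (fun i => (u : ℝ) * (n * x i + y i)) := by congr 1; ext i; push_cast; ring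
    _ ≤ u * nrm (fun i => (n : ℝ) * x i + y i) := nrm_natCast_mul_le u _
    _ < u * (ψ (u * n) / u) := by gcongr
    _ = ψ (u * n) := mul_div_cancel₀ _ (Nat.cast_ne_zero.2 hu.ne')

theorem stmt8 {d : ℕ} (x : Fin d → ℝ) (u : ℕ) (hu : 0 < u) (y : Fin d → ℝ)
    (hy : y ∈ Phi x) : (fun i => (u : ℝ) * y i) ∈ Phi x := by
  simp only [Phi, PiSet, Set.mem_ofPred_eq, Set.mem_iInter₂] at hy ⊢
  exact fun ψ hψ => natCast_mul_snd_mem_W hu (hy _ (comp_mul_div_mem_calD hψ hu))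
end

section
/- Let d = 1. If x ∈ ℚ and y ∈ Φ(x), then y ∈ ℚ. -/
open scoped ENNReal
open Filter

/-- Distance from `t ∈ ℝ` to the nearest integer. -/
noncomputable def nrm1 (t : ℝ) : ℝ := |t - round t|

/-- `S_ℓ(x,y) = Σ_{n≥ℓ} min_{ℓ≤m≤n} ‖mx+y‖`, valued in `[0,∞]` (case `d = 1`). -/
noncomputable def S1 (l : ℤ) (x y : ℝ) : ℝ≥0∞ :=
  ∑' n : ℕ, ⨅ m ∈ Finset.Icc l (l + n), ENNReal.ofReal (nrm1 ((m : ℝ) * x + y))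

/-- The class `𝒟` of non-increasing `ψ : ℕ → ℝ≥0` with `Σ ψ(n) = ∞` (case `d = 1`). -/
def calD1 : Set (ℕ → ℝ) := {ψ | (∀ n, 0 ≤ ψ n) ∧ Antitone ψ ∧ ¬ Summable ψ}

/-- `Π` for `d = 1`. -/
def Pi1 : Set (ℝ × ℝ) :=
  {p | ∀ ψ ∈ calD1, ∃ᶠ n : ℕ in atTop, nrm1 ((n : ℝ) * p.1 + p.2) < ψ n}

/-- The vertical fiber `Φ(x)`. -/
def Phi1 (x : ℝ) : Set ℝ := {y | (x, y) ∈ Pi1}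

/-- The horizontal fiber `Π^y`. -/
def PiY1 (y : ℝ) : Set ℝ := {x | (x, y) ∈ Pi1}

/-!
For rational `x = p / q`, the sequence `‖n x + y‖` is `q`-periodic in `n`, so it takes only the
finitely many values `‖r x + y‖` with `r < q`. If `y` is irrational, all of them are positive, so
`‖n x + y‖ ≥ ε > 0` for every `n`, and the constant function `ε` (which lies in `𝒟`) witnesses
`y ∉ Φ(x)`.
-/

lemma nrm1_add_intCast (t : ℝ) (m : ℤ) : nrm1 (t + m) = nrm1 t := by
  unfold nrm1
  rw [round_add_intCast]
  push_cast
  ring_nf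

lemma nrm1_pos_of_irrational {t : ℝ} (h : Irrational t) : 0 < nrm1 t :=
  abs_pos.mpr (sub_ne_zero.mpr (h.ne_int (round t)))

lemma const_mem_calD1 {ε : ℝ} (hε : 0 < ε) : (fun _ : ℕ => ε) ∈ calD1 :=
  ⟨fun _ => hε.le, antitone_const, (summable_const_iff ε).not.mpr hε.ne'⟩

lemma notMem_Phi1_of_forall_le_nrm1 {x y ε : ℝ} (hε : 0 < ε)
    (hle : ∀ n : ℕ, ε ≤ nrm1 ((n : ℝ) * x + y)) : y ∉ Phi1 x := fun hy => by
  obtain ⟨n, hlt⟩ := (hy _ (const_mem_calD1 hε)).exists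
  exact (hle n).not_gt hlt

lemma periodic_nrm1_natCast_mul_ratCast_add (x : ℚ) (y : ℝ) :
    Function.Periodic (fun n : ℕ => nrm1 ((n : ℝ) * x + y)) x.den := fun n => by
  have hshift : ((n + x.den : ℕ) : ℝ) * x + y = ((n : ℝ) * x + y) + (x.num : ℤ) := by
    have hnum : ((x.den : ℝ) * x) = x.num := by exact_mod_cast Rat.den_mul_eq_num x
    push_cast
    linear_combination hnum
  simp only [hshift, nrm1_add_intCast]

lemma exists_pos_forall_le_nrm1_of_irrational (x : ℚ) {y : ℝ} (hy : Irrational y) :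
    ∃ ε > 0, ∀ n : ℕ, ε ≤ nrm1 ((n : ℝ) * x + y) := by
  set f : ℕ → ℝ := fun n => nrm1 ((n : ℝ) * x + y)
  have hne : (Finset.range x.den).Nonempty := Finset.nonempty_range_iff.mpr x.den_ne_zero
  refine ⟨(Finset.range x.den).inf' hne f, ?_, fun n => ?_⟩
  · refine (Finset.lt_inf'_iff hne).mpr fun r _ => nrm1_pos_of_irrational ?_
    have hcast : (r : ℝ) * x = ((r * x : ℚ) : ℝ) := by push_cast; ring
    rw [hcast]
    exact hy.ratCast_add _
  · rw [← (periodic_nrm1_natCast_mul_ratCast_add x y).map_mod_nat n]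
    exact Finset.inf'_le f (Finset.mem_range.mpr (Nat.mod_lt n x.den_pos))

theorem stmt16 (x : ℚ) (y : ℝ) (hy : y ∈ Phi1 (x : ℝ)) :
    ∃ q : ℚ, y = (q : ℝ) := by
  by_contra hrat
  have hirr : Irrational y := fun ⟨q, hq⟩ => hrat ⟨q, hq.symm⟩
  obtain ⟨ε, hε, hle⟩ := exists_pos_forall_le_nrm1_of_irrational x hirr
  exact notMem_Phi1_of_forall_le_nrm1 hε hle hy
end
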